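/- arXiv:1007.1800 — 3 statements merged into one kernel-verified Lean document; each statement's English description precedes it below -/
import Mathlib

section
/- Let E = (C,V) be an election with m = |C| candidates, and define sc'(c) = m² · max_{c' ≠ c} df(c,c') where df(c,c') = max(0, ⌊n/2⌋ + 1 − N(c,c')). If there is no Condorcet winner in E, then for any candidate c, letting c_k achieve the maximum df(c,c_k) = max_{c' ≠ c} df(c,c') with df(c,c_k) > 0, it holds that N(c,c_k) equals the maximin score of c. -/
open scoped Classical

/-- Number of voters (preference lists, earlier = more preferred) ranking `a` above `b`. -/
def Nl {α : Type*} [DecidableEq α] (P : List (List α)) (a b : α) : ℕ :=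
  P.countP (fun l => decide (l.idxOf a < l.idxOf b))

/-- One adjacent transposition inside a single preference list. -/
def adjSwapVoter {α : Type*} (l l' : List α) : Prop :=
  ∃ (pre post : List α) (a b : α), l = pre ++ a :: b :: post ∧ l' = pre ++ b :: a :: post

/-- One adjacent transposition in one voter's list of the profile. -/
def adjSwap {α : Type*} (P P' : List (List α)) : Prop :=
  ∃ (pre post : List (List α)) (l l' : List α),
    P = pre ++ l :: post ∧ P' = pre ++ l' :: post ∧ adjSwapVoter l l'

/-- `reach k P P'`: profile `P'` is obtained from `P` by exactly `k` adjacent swaps. -/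
def reach {α : Type*} : ℕ → List (List α) → List (List α) → Prop
  | 0, P, P' => P = P'
  | k + 1, P, P' => ∃ Q, adjSwap P Q ∧ reach k Q P'

/-- `c` is a Condorcet winner of `(C, P)`. -/
def CondW {α : Type*} [DecidableEq α] (C : Finset α) (P : List (List α)) (c : α) : Prop :=
  ∀ c' ∈ C, c' ≠ c → Nl P c' c < Nl P c c'

/-- The Dodgson score of `c`: the least number of adjacent swaps making `c` a Condorcet winner. -/
noncomputable def scoreD {α : Type*} [DecidableEq α]
    (C : Finset α) (P : List (List α)) (c : α) : ℕ :=
  sInf {k | ∃ P', reach k P P' ∧ CondW C P' c}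

/-- The maximin score of `c` in `(C, P)`: `min_{c' ∈ C, c' ≠ c} N(c,c')`. -/
noncomputable def mmScoreL {α : Type*} [DecidableEq α]
    (C : Finset α) (P : List (List α)) (c : α) : ℕ :=
  sInf {n | ∃ c' ∈ C, c' ≠ c ∧ n = Nl P c c'}

/-- If there is no Condorcet winner and `ck` attains the maximal deficit
    `df(c,ck) = max_{c' ≠ c} df(c,c') > 0` (with `df(c,c') = ⌊n/2⌋ + 1 − N(c,c')`,
    truncated subtraction), then `N(c,ck)` equals the maximin score of `c`. -/
theorem deficit_witness_gives_maximin_score {α : Type*} [DecidableEq α]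
    (C : Finset α) (P : List (List α)) (c ck : α)
    (hC : 2 ≤ C.card) (hc : c ∈ C) (hck : ck ∈ C) (hne : ck ≠ c)
    (hvalid : ∀ l ∈ P, l.Nodup ∧ ∀ x ∈ C, x ∈ l)
    (hnoCond : ∀ d ∈ C, ¬ CondW C P d)
    (hmax : ∀ c' ∈ C, c' ≠ c →
      P.length / 2 + 1 - Nl P c c' ≤ P.length / 2 + 1 - Nl P c ck)
    (hpos : 0 < P.length / 2 + 1 - Nl P c ck) :
    Nl P c ck = mmScoreL C P c := by
  have hmem : Nl P c ck ∈ {n | ∃ c' ∈ C, c' ≠ c ∧ n = Nl P c c'} := ⟨ck, hck, hne, rfl⟩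
  refine le_antisymm ?_ (Nat.sInf_le hmem)
  refine le_csInf ⟨_, hmem⟩ ?_
  rintro b ⟨c', hc', hne', rfl⟩
  have := hmax c' hc' hne'
  omega
end

section
/- In a maximin election, if p is a unique winner and some set A' of candidates is added so that p ceases to be a unique winner of (C ∪ A', V), then there exist two candidates c', d' ∈ C ∪ A' \ {p} (not necessarily distinct from each other... formally a set of at most 2 candidates) such that p is already not a unique winner of (C ∪ {c',d'}, V). -/
open scoped Classical

/-- Number of voters (strict preference relations) in `V` ranking `a` above `b`. -/
noncomputable def Nrel {α : Type*} (V : List (α → α → Prop)) (a b : α) : ℕ :=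
  (V.map (fun v => if v a b then 1 else 0)).sum

/-- The maximin score of candidate `c` in election `(D, V)`. -/
noncomputable def mmScore {α : Type*} (D : Finset α) (V : List (α → α → Prop)) (c : α) : ℕ :=
  sInf {n | ∃ c' ∈ D, c' ≠ c ∧ n = Nrel V c c'}

/-- `p` is a unique maximin winner of `(D, V)`. -/
def uniqueWinner {α : Type*} (D : Finset α) (V : List (α → α → Prop)) (p : α) : Prop :=
  p ∈ D ∧ ∀ c ∈ D, c ≠ p → mmScore D V c < mmScore D V p

/-- If adding the candidates `A'` dethrones the unique maximin winner `p`, then adding some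
    set of at most two of the candidates of `C ∪ A'` (other than `p`) already dethrones `p`. -/
theorem maximin_destructive_ac_two_candidates_suffice {α : Type*} [DecidableEq α]
    (C A' : Finset α) (V : List (α → α → Prop)) (p : α)
    (hC : 2 ≤ C.card) (hp : p ∈ C) (hA : A'.Nonempty) (hdisj : Disjoint C A')
    (htot : ∀ v ∈ V, ∀ a b : α, a ≠ b → (v a b ↔ ¬ v b a))
    (hwin : uniqueWinner C V p)
    (hlose : ¬ uniqueWinner (C ∪ A') V p) :
    ∃ T : Finset α, T ⊆ (C ∪ A') \ {p} ∧ T.card ≤ 2 ∧ ¬ uniqueWinner (C ∪ T) V p := by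
  have hpU : p ∈ C ∪ A' := Finset.mem_union_left _ hp
  rw [uniqueWinner] at hlose
  push_neg at hlose
  obtain ⟨c, hcU, hcp, hge⟩ := hlose hpU
  -- a witness d' achieving p's score in C ∪ A'
  obtain ⟨q, hq, hqp⟩ : ∃ q ∈ C, q ≠ p := by
    obtain ⟨q, hq, hqp⟩ := Finset.exists_mem_ne (s := C) (by omega) p
    exact ⟨q, hq, hqp⟩
  have hne : {n | ∃ c' ∈ C ∪ A', c' ≠ p ∧ n = Nrel V p c'}.Nonempty :=
    ⟨Nrel V p q, q, Finset.mem_union_left _ hq, hqp, rfl⟩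
  obtain ⟨d', hd', hdp, hdeq⟩ := Nat.sInf_mem hne
  refine ⟨{c, d'}, ?_, ?_, ?_⟩
  · intro x hx
    simp only [Finset.mem_insert, Finset.mem_singleton] at hx
    rcases hx with rfl | rfl
    · simp [Finset.mem_sdiff, hcU, hcp]
    · simp [Finset.mem_sdiff, hd', hdp]
  · exact (Finset.card_insert_le _ _).trans (by simp)
  · intro hU
    have hcT : c ∈ C ∪ {c, d'} := by simp
    have hlt := hU.2 c hcT hcp
    -- c's score only increases when restricting to C ∪ {c, d'}
    have h1 : mmScore (C ∪ A') V c ≤ mmScore (C ∪ {c, d'}) V c := by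
      have hne2 : {n | ∃ c' ∈ C ∪ ({c, d'} : Finset α), c' ≠ c ∧ n = Nrel V c c'}.Nonempty :=
        ⟨Nrel V c p, p, Finset.mem_union_left _ hp, fun h => hcp h.symm, rfl⟩
      obtain ⟨e, he, hec, heq⟩ := Nat.sInf_mem hne2
      have heU : e ∈ C ∪ A' := by
        rcases Finset.mem_union.mp he with h | h
        · exact Finset.mem_union_left _ h
        · simp only [Finset.mem_insert, Finset.mem_singleton] at h
          rcases h with rfl | rfl
          · exact hcU
          · exact hd'
      exact Nat.sInf_le ⟨e, heU, hec, heq⟩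
    -- p's score in C ∪ {c, d'} is at most Nrel V p d'
    have h2 : mmScore (C ∪ {c, d'}) V p ≤ Nrel V p d' :=
      Nat.sInf_le ⟨d', by simp, hdp, rfl⟩
    have h3 : mmScore (C ∪ A') V p = Nrel V p d' := hdeq
    unfold mmScore at *
    omega
end

section
/- In maximin voting with candidate set C = B ∪ {p}, spoiler set A indexed by a family S of 3-subsets of B = {b₁,…,b_{3k}}, and the specific 2n+2 voters constructed in the reduction, for any A'' ⊆ A with |A''| ≤ k, candidate p is a unique maximin winner of (C ∪ A'', V) if and only if the subfamily S'' = {S_j : a_j ∈ A''} is an exact cover of B (i.e., |A''| = k and the sets in S'' are pairwise disjoint with union B). -/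
open scoped Classical

namespace MaximinAC

/-- Candidates: `none` is the preferred candidate `p`; `some (Sum.inl i)` is `bᵢ ∈ B`
    (with `B = {b₁,…,b_{3k}}`); `some (Sum.inr j)` is the spoiler candidate `aⱼ`. -/
abbrev Cand (k n : ℕ) := Option (Fin (3 * k) ⊕ Fin n)

/-- A fixed arbitrary tiebreaking enumeration of the candidates (Convention A). -/
noncomputable def tb (k n : ℕ) : Cand k n → ℕ :=
  fun c => ((Fintype.equivFin (Cand k n)) c : ℕ)

/-- The strict preference order of a voter given by block ranks `blk` (lower block =
    more preferred); inside a block, candidates are ordered by the fixed tiebreak order,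
    reversed when `rev = true`. -/
noncomputable def mkVote {k n : ℕ} (blk : Cand k n → ℕ) (rev : Bool) :
    Cand k n → Cand k n → Prop :=
  fun a b => blk a < blk b ∨
    (blk a = blk b ∧ (if rev then tb k n b < tb k n a else tb k n a < tb k n b))

/-- Blocks for voter `vᵢ` (`i ≤ n`): `p > B − Sᵢ > aᵢ > Sᵢ > A − {aᵢ}`. -/
def blk1 {k n : ℕ} (S : Fin n → Finset (Fin (3 * k))) (i : Fin n) : Cand k n → ℕ
  | none => 0
  | some (Sum.inl b) => if b ∈ S i then 3 else 1
  | some (Sum.inr j) => if j = i then 2 else 4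

/-- Blocks for voter `v_{n+i}`: `rev(A − {aᵢ}) > aᵢ > rev(Sᵢ) > rev(B − Sᵢ) > p`. -/
def blk2 {k n : ℕ} (S : Fin n → Finset (Fin (3 * k))) (i : Fin n) : Cand k n → ℕ
  | none => 4
  | some (Sum.inl b) => if b ∈ S i then 2 else 3
  | some (Sum.inr j) => if j = i then 1 else 0

/-- Blocks for voter `v_{2n+1}`: `p > A > B`. -/
def blk3 {k n : ℕ} : Cand k n → ℕ
  | none => 0
  | some (Sum.inl _) => 2
  | some (Sum.inr _) => 1

/-- Blocks for voter `v_{2n+2}`: `rev(B) > p > rev(A)`. -/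
def blk4 {k n : ℕ} : Cand k n → ℕ
  | none => 1
  | some (Sum.inl _) => 0
  | some (Sum.inr _) => 2

/-- The `2n + 2` voters of the reduction. -/
noncomputable def profile (k n : ℕ) (S : Fin n → Finset (Fin (3 * k))) :
    List (Cand k n → Cand k n → Prop) :=
  (List.ofFn fun i : Fin n => mkVote (blk1 S i) false) ++
  (List.ofFn fun i : Fin n => mkVote (blk2 S i) true) ++
  [mkVote (blk3 (k := k) (n := n)) false, mkVote (blk4 (k := k) (n := n)) true]

/-- Number of voters in `V` ranking `a` above `b`. -/
noncomputable def Nrel {k n : ℕ} (V : List (Cand k n → Cand k n → Prop))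
    (a b : Cand k n) : ℕ :=
  (V.map (fun v => if v a b then 1 else 0)).sum

/-- The maximin score of candidate `c` in election `(D, V)`. -/
noncomputable def mmScore {k n : ℕ} (D : Finset (Cand k n))
    (V : List (Cand k n → Cand k n → Prop)) (c : Cand k n) : ℕ :=
  sInf {m | ∃ c' ∈ D, c' ≠ c ∧ m = Nrel V c c'}

/-- The base candidate set `C = B ∪ {p}`. -/
noncomputable def Cbase (k n : ℕ) : Finset (Cand k n) :=
  insert none ((Finset.univ : Finset (Fin (3 * k))).image (fun b => some (Sum.inl b)))

/-- The candidate set after adding the spoilers indexed by `A''`. -/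
noncomputable def withA (k n : ℕ) (A'' : Finset (Fin n)) : Finset (Cand k n) :=
  Cbase k n ∪ A''.image (fun j => some (Sum.inr j))

section Aux
variable {k n : ℕ}

lemma tb_inj {a b : Cand k n} (h : tb k n a = tb k n b) : a = b := by
  unfold tb at h
  exact (Fintype.equivFin (Cand k n)).injective (Fin.val_injective h)

lemma mkVote_of_lt {blk : Cand k n → ℕ} {rev : Bool} {a b : Cand k n}
    (h : blk a < blk b) : mkVote blk rev a b := Or.inl h

lemma not_mkVote_of_lt {blk : Cand k n → ℕ} {rev : Bool} {a b : Cand k n}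
    (h : blk b < blk a) : ¬ mkVote blk rev a b := by
  rintro (h' | ⟨h', _⟩) <;> omega

lemma ind_tie {blk blk' : Cand k n → ℕ} {a b : Cand k n}
    (h : blk a = blk b) (h' : blk' a = blk' b) (hab : a ≠ b) :
    ((if mkVote blk false a b then 1 else 0) : ℕ) +
      (if mkVote blk' true a b then 1 else 0) = 1 := by
  have htb : tb k n a ≠ tb k n b := fun hh => hab (tb_inj hh)
  simp only [mkVote, h, h', lt_self_iff_false, false_or, true_and, if_true, if_false,
    Bool.false_eq_true, ite_true, ite_false]
  rcases Nat.lt_trichotomy (tb k n a) (tb k n b) with hlt | heq | hgt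
  · rw [if_pos hlt, if_neg (by omega)]
  · exact absurd heq htb
  · rw [if_neg (by omega), if_pos hgt]

lemma Nrel_eq (S : Fin n → Finset (Fin (3 * k))) (a b : Cand k n) :
    Nrel (profile k n S) a b =
      (∑ i : Fin n, (((if mkVote (blk1 S i) false a b then 1 else 0) : ℕ) +
        (if mkVote (blk2 S i) true a b then 1 else 0)))
      + ((if mkVote (blk3 (k := k) (n := n)) false a b then 1 else 0)
      + (if mkVote (blk4 (k := k) (n := n)) true a b then 1 else 0)) := by
  simp [Nrel, profile, List.sum_ofFn, Finset.sum_add_distrib, Function.comp]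
  ring

end Aux
section Tallies
variable {k n : ℕ} (S : Fin n → Finset (Fin (3 * k)))

lemma sum_one : (∑ _i : Fin n, (1 : ℕ)) = n := by simp

lemma Nrel_p_b (b : Fin (3 * k)) :
    Nrel (profile k n S) none (some (Sum.inl b)) = n + 1 := by
  rw [Nrel_eq]
  rw [Finset.sum_congr rfl (fun i _ => by
    rw [if_pos (mkVote_of_lt (by simp only [blk1]; split <;> omega)),
        if_neg (not_mkVote_of_lt (by simp only [blk2]; split <;> omega))]),
    sum_one,
    if_pos (mkVote_of_lt (by simp [blk3])),
    if_neg (not_mkVote_of_lt (by simp [blk4]))]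

lemma Nrel_p_a (j : Fin n) :
    Nrel (profile k n S) none (some (Sum.inr j)) = n + 2 := by
  rw [Nrel_eq]
  rw [Finset.sum_congr rfl (fun i _ => by
    rw [if_pos (mkVote_of_lt (by simp only [blk1]; split <;> omega)),
        if_neg (not_mkVote_of_lt (by simp only [blk2]; split <;> omega))]),
    sum_one,
    if_pos (mkVote_of_lt (by simp [blk3])),
    if_pos (mkVote_of_lt (by simp [blk4]))]

lemma Nrel_a_p (j : Fin n) :
    Nrel (profile k n S) (some (Sum.inr j)) none = n := by
  rw [Nrel_eq]
  rw [Finset.sum_congr rfl (fun i _ => by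
    rw [if_neg (not_mkVote_of_lt (by simp only [blk1]; split <;> omega)),
        if_pos (mkVote_of_lt (by simp only [blk2]; split <;> omega))]),
    sum_one,
    if_neg (not_mkVote_of_lt (by simp [blk3])),
    if_neg (not_mkVote_of_lt (by simp [blk4]))]
  omega

lemma Nrel_b_p (b : Fin (3 * k)) :
    Nrel (profile k n S) (some (Sum.inl b)) none = n + 1 := by
  rw [Nrel_eq]
  rw [Finset.sum_congr rfl (fun i _ => by
    rw [if_neg (not_mkVote_of_lt (by simp only [blk1]; split <;> omega)),
        if_pos (mkVote_of_lt (by simp only [blk2]; split <;> omega))]),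
    sum_one,
    if_neg (not_mkVote_of_lt (by simp [blk3])),
    if_pos (mkVote_of_lt (by simp [blk4]))]

lemma Nrel_b_b {b b' : Fin (3 * k)} (hbb : b ≠ b') :
    Nrel (profile k n S) (some (Sum.inl b)) (some (Sum.inl b')) = n + 1 := by
  have hne : (some (Sum.inl b) : Cand k n) ≠ some (Sum.inl b') := by
    simp [hbb]
  rw [Nrel_eq]
  rw [Finset.sum_congr rfl (fun i _ => by
    by_cases hb : b ∈ S i <;> by_cases hb' : b' ∈ S i
    · exact ind_tie (by simp [blk1, hb, hb']) (by simp [blk2, hb, hb']) hne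
    · rw [if_neg (not_mkVote_of_lt (by simp [blk1, hb, hb'])),
          if_pos (mkVote_of_lt (by simp [blk2, hb, hb']))]
    · rw [if_pos (mkVote_of_lt (by simp [blk1, hb, hb'])),
          if_neg (not_mkVote_of_lt (by simp [blk2, hb, hb']))]
    · exact ind_tie (by simp [blk1, hb, hb']) (by simp [blk2, hb, hb']) hne),
    sum_one, ind_tie (by simp [blk3]) (by simp [blk4]) hne]

lemma Nrel_b_a (b : Fin (3 * k)) (j : Fin n) :
    Nrel (profile k n S) (some (Sum.inl b)) (some (Sum.inr j)) =
      if b ∈ S j then n else n + 1 := by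
  have hn : 0 < n := j.pos
  rw [Nrel_eq]
  rw [← Finset.add_sum_erase _ _ (Finset.mem_univ j)]
  have herase : ∀ i ∈ Finset.univ.erase j,
      ((if mkVote (blk1 S i) false (some (Sum.inl b)) (some (Sum.inr j)) then 1 else 0) : ℕ) +
        (if mkVote (blk2 S i) true (some (Sum.inl b)) (some (Sum.inr j)) then 1 else 0) = 1 := by
    intro i hi
    have hij : j ≠ i := fun h => (Finset.mem_erase.mp hi).1 h.symm
    rw [if_pos (mkVote_of_lt (by simp only [blk1, if_neg hij]; split <;> omega)),
        if_neg (not_mkVote_of_lt (by simp only [blk2, if_neg hij]; split <;> omega))]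
  rw [Finset.sum_congr rfl herase, Finset.sum_const, Finset.card_erase_of_mem (Finset.mem_univ j),
    Finset.card_univ, Fintype.card_fin, smul_eq_mul, mul_one]
  have h3 : @blk3 k n (some (Sum.inr j)) < @blk3 k n (some (Sum.inl b)) := by
    simp [blk3]
  have h4 : @blk4 k n (some (Sum.inl b)) < @blk4 k n (some (Sum.inr j)) := by
    simp [blk4]
  rw [if_neg (not_mkVote_of_lt h3), if_pos (mkVote_of_lt h4)]
  by_cases hb : b ∈ S j
  · have h1 : blk1 S j (some (Sum.inr j)) < blk1 S j (some (Sum.inl b)) := by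
      simp [blk1, hb]
    have h2 : blk2 S j (some (Sum.inr j)) < blk2 S j (some (Sum.inl b)) := by
      simp [blk2, hb]
    rw [if_pos hb, if_neg (not_mkVote_of_lt h1), if_neg (not_mkVote_of_lt h2)]
    omega
  · have h1 : blk1 S j (some (Sum.inl b)) < blk1 S j (some (Sum.inr j)) := by
      simp [blk1, hb]
    have h2 : blk2 S j (some (Sum.inr j)) < blk2 S j (some (Sum.inl b)) := by
      simp [blk2, hb]
    rw [if_neg hb, if_pos (mkVote_of_lt h1), if_neg (not_mkVote_of_lt h2)]
    omega

end Tallies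
section Main
variable {k n : ℕ}

lemma mem_withA_iff {A'' : Finset (Fin n)} {c : Cand k n} :
    c ∈ withA k n A'' ↔
      c = none ∨ (∃ b, c = some (Sum.inl b)) ∨ ∃ j ∈ A'', c = some (Sum.inr j) := by
  simp only [withA, Cbase, Finset.mem_union, Finset.mem_insert, Finset.mem_image,
    Finset.mem_univ, true_and]
  constructor
  · rintro ((h | ⟨b, hb⟩) | ⟨j, hj, hc⟩)
    · exact Or.inl h
    · exact Or.inr (Or.inl ⟨b, hb.symm⟩)
    · exact Or.inr (Or.inr ⟨j, hj, hc.symm⟩)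
  · rintro (h | ⟨b, hb⟩ | ⟨j, hj, hc⟩)
    · exact Or.inl (Or.inl h)
    · exact Or.inl (Or.inr ⟨b, hb.symm⟩)
    · exact Or.inr ⟨j, hj, hc.symm⟩

lemma p_mem_withA {A'' : Finset (Fin n)} : (none : Cand k n) ∈ withA k n A'' :=
  mem_withA_iff.mpr (Or.inl rfl)

lemma b_mem_withA {A'' : Finset (Fin n)} (b : Fin (3 * k)) :
    (some (Sum.inl b) : Cand k n) ∈ withA k n A'' :=
  mem_withA_iff.mpr (Or.inr (Or.inl ⟨b, rfl⟩))

lemma a_mem_withA {A'' : Finset (Fin n)} {j : Fin n} (hj : j ∈ A'') :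
    (some (Sum.inr j) : Cand k n) ∈ withA k n A'' :=
  mem_withA_iff.mpr (Or.inr (Or.inr ⟨j, hj, rfl⟩))

lemma cover_strong (hk : 1 ≤ k) (S : Fin n → Finset (Fin (3 * k)))
    (hS : ∀ j, (S j).card = 3) (A'' : Finset (Fin n)) (hA : A''.card ≤ k)
    (hcov : ∀ b : Fin (3 * k), ∃ j ∈ A'', b ∈ S j) :
    A''.card = k ∧ ∀ j1 ∈ A'', ∀ j2 ∈ A'', j1 ≠ j2 → Disjoint (S j1) (S j2) := by
  have hU : A''.biUnion S = Finset.univ :=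
    Finset.eq_univ_iff_forall.mpr fun b => Finset.mem_biUnion.mpr (hcov b)
  have hcardU : (A''.biUnion S).card = 3 * k := by
    rw [hU, Finset.card_univ, Fintype.card_fin]
  have hsum : ∀ t : Finset (Fin n), ∑ j ∈ t, (S j).card = 3 * t.card := by
    intro t
    rw [Finset.sum_congr rfl fun j _ => hS j, Finset.sum_const, smul_eq_mul, mul_comm]
  have hcb : 3 * k ≤ 3 * A''.card := by
    calc 3 * k = (A''.biUnion S).card := hcardU.symm
      _ ≤ ∑ j ∈ A'', (S j).card := Finset.card_biUnion_le
      _ = 3 * A''.card := hsum A''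
  have hcard : A''.card = k := by omega
  refine ⟨hcard, ?_⟩
  intro j1 h1 j2 h2 hne
  by_contra hnd
  obtain ⟨x, hx1, hx2⟩ := Finset.not_disjoint_iff.mp hnd
  have hsub : A''.biUnion S ⊆ (S j1).erase x ∪ (A''.erase j1).biUnion S := by
    intro y hy
    obtain ⟨j, hj, hyj⟩ := Finset.mem_biUnion.mp hy
    by_cases hjj : j = j1
    · subst hjj
      by_cases hyx : y = x
      · subst hyx
        exact Finset.mem_union_right _
          (Finset.mem_biUnion.mpr ⟨j2, Finset.mem_erase.mpr ⟨hne.symm, h2⟩, hx2⟩)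
      · exact Finset.mem_union_left _ (Finset.mem_erase.mpr ⟨hyx, hyj⟩)
    · exact Finset.mem_union_right _
        (Finset.mem_biUnion.mpr ⟨j, Finset.mem_erase.mpr ⟨hjj, hj⟩, hyj⟩)
  have h1c : ((S j1).erase x).card = 2 := by
    rw [Finset.card_erase_of_mem hx1, hS]
  have h2c : ((A''.erase j1).biUnion S).card ≤ 3 * (k - 1) := by
    calc ((A''.erase j1).biUnion S).card ≤ ∑ j ∈ A''.erase j1, (S j).card :=
          Finset.card_biUnion_le
      _ = 3 * (A''.erase j1).card := hsum _
      _ = 3 * (k - 1) := by rw [Finset.card_erase_of_mem h1, hcard]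
  have hle : 3 * k ≤ ((S j1).erase x).card + ((A''.erase j1).biUnion S).card := by
    calc 3 * k = (A''.biUnion S).card := hcardU.symm
      _ ≤ ((S j1).erase x ∪ (A''.erase j1).biUnion S).card := Finset.card_le_card hsub
      _ ≤ _ := Finset.card_union_le _ _
  omega

end Main
section Score
variable {k n : ℕ}

lemma mmScore_le {D : Finset (Cand k n)} {V : List (Cand k n → Cand k n → Prop)}
    {c c' : Cand k n} (h1 : c' ∈ D) (h2 : c' ≠ c) : mmScore D V c ≤ Nrel V c c' := by
  unfold mmScore
  exact Nat.sInf_le ⟨c', h1, h2, rfl⟩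

lemma le_mmScore {D : Finset (Cand k n)} {V : List (Cand k n → Cand k n → Prop)}
    {c : Cand k n} {L : ℕ} (c0 : Cand k n) (h0 : c0 ∈ D) (h0' : c0 ≠ c)
    (h : ∀ c' ∈ D, c' ≠ c → L ≤ Nrel V c c') : L ≤ mmScore D V c := by
  unfold mmScore
  refine le_csInf ⟨Nrel V c c0, c0, h0, h0', rfl⟩ ?_
  rintro m ⟨c', hc', hne, rfl⟩
  exact h c' hc' hne

end Score
/-- Correctness of the X3C reduction: for `A'' ⊆ A` with `|A''| ≤ k`, candidate `p` is a
    unique maximin winner of `(C ∪ A'', V)` iff `{Sⱼ : aⱼ ∈ A''}` is an exact cover of `B`. -/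
theorem maximin_ac_reduction_correct (k n : ℕ) (hk : 1 ≤ k)
    (S : Fin n → Finset (Fin (3 * k))) (hS : ∀ j, (S j).card = 3)
    (A'' : Finset (Fin n)) (hA : A''.card ≤ k) :
    ((none : Cand k n) ∈ withA k n A'' ∧
      ∀ c ∈ withA k n A'', c ≠ none →
        mmScore (withA k n A'') (profile k n S) c
          < mmScore (withA k n A'') (profile k n S) none)
    ↔ (A''.card = k ∧
        (∀ j1 ∈ A'', ∀ j2 ∈ A'', j1 ≠ j2 → Disjoint (S j1) (S j2)) ∧
        (∀ b : Fin (3 * k), ∃ j ∈ A'', b ∈ S j)) := by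
  have hb0 : (0 : ℕ) < 3 * k := by omega
  set b0 : Fin (3 * k) := ⟨0, hb0⟩
  -- score of p is n + 1
  have hscore_p : mmScore (withA k n A'') (profile k n S) none = n + 1 := by
    apply le_antisymm
    · have := mmScore_le (V := profile k n S) (c := (none : Cand k n)) (b_mem_withA (A'' := A'') b0) (by simp)
      rwa [Nrel_p_b] at this
    · apply le_mmScore (some (Sum.inl b0)) (b_mem_withA b0) (by simp)
      rintro c' hc' hne
      rcases mem_withA_iff.mp hc' with rfl | ⟨b, rfl⟩ | ⟨j, hj, rfl⟩
      · exact absurd rfl hne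
      · rw [Nrel_p_b]
      · rw [Nrel_p_a]; omega
  constructor
  · rintro ⟨-, hwin⟩
    have hcov : ∀ b : Fin (3 * k), ∃ j ∈ A'', b ∈ S j := by
      intro b
      by_contra hbc
      push_neg at hbc
      have hlt := hwin (some (Sum.inl b)) (b_mem_withA b) (by simp)
      rw [hscore_p] at hlt
      have hge : n + 1 ≤ mmScore (withA k n A'') (profile k n S) (some (Sum.inl b)) := by
        apply le_mmScore none p_mem_withA (by simp)
        rintro c' hc' hne
        rcases mem_withA_iff.mp hc' with rfl | ⟨b', rfl⟩ | ⟨j, hj, rfl⟩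
        · rw [Nrel_b_p]
        · have hbb : b ≠ b' := by
            intro h; exact hne (by rw [h])
          rw [Nrel_b_b S hbb]
        · rw [Nrel_b_a, if_neg (hbc j hj)]
      omega
    obtain ⟨hcard, hdisj⟩ := cover_strong hk S hS A'' hA hcov
    exact ⟨hcard, hdisj, hcov⟩
  · rintro ⟨hcard, hdisj, hcov⟩
    refine ⟨p_mem_withA, ?_⟩
    intro c hc hne
    rw [hscore_p]
    rcases mem_withA_iff.mp hc with rfl | ⟨b, rfl⟩ | ⟨j, hj, rfl⟩
    · exact absurd rfl hne
    · obtain ⟨j, hj, hbj⟩ := hcov b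
      have hle : mmScore (withA k n A'') (profile k n S) (some (Sum.inl b)) ≤ n := by
        have := mmScore_le (V := profile k n S) (a_mem_withA (k := k) hj) (c := some (Sum.inl b)) (by simp)
        rwa [Nrel_b_a, if_pos hbj] at this
      omega
    · have hle : mmScore (withA k n A'') (profile k n S) (some (Sum.inr j)) ≤ n :=
        Nat.sInf_le ⟨none, p_mem_withA, by simp, (Nrel_a_p S j).symm⟩
      omega
end MaximinAC
end
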